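/- With unit activation costs, every optimal assignment s* has the property that each occupied slot contains at least one job whose window contains no other occupied slot of s*; consequently there is a payment vector ξ (charging that job 1 on its slot and everyone else 0) making (s*, ξ) a Nash equilibrium of the coordination mechanism. -/

import Mathlib

/-- Number of jobs declaring slot `t`. -/
def load {n : ℕ} (s : Fin n → ℤ) (t : ℤ) : ℕ :=
  (Finset.univ.filter fun j => s j = t).card

/-- Total declared payment on slot `t`. -/
def pay {n : ℕ} (s : Fin n → ℤ) (ξ : Fin n → ℝ) (t : ℤ) : ℝ :=
  ∑ j ∈ Finset.univ.filter (fun j => s j = t), ξ j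

/-- Unit activation cost: `c 0 = 0` and `c l = 1` for `l ≥ 1`. -/
def unitCost (l : ℕ) : ℝ := if l = 0 then 0 else 1

/-- Total cost of an assignment with unit activation costs: the number of
occupied slots. -/
def occupied {n : ℕ} (s : Fin n → ℤ) : ℕ := (Finset.univ.image s).card

/-!
If every job on an occupied slot `t` of an optimal assignment had another occupied slot in its
window, moving all of them there would free `t` and save one activation. Hence every occupied
slot has a job whose window meets no other occupied slot. Charging one such job per slot the
whole unit cost pays for every slot, and that job cannot gain by deviating: any other slot in
its window is empty, so it would have to pay the full unit cost there as well.
-/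

open Finset

section Relocation

variable {ι α : Type*} [Fintype ι] [DecidableEq α]

theorem exists_card_image_lt_of_relocatable {W : ι → Set α} {s : ι → α} {t : α}
    (hs : ∀ j, s j ∈ W j) (ht : t ∈ univ.image s)
    (h : ∀ j, s j = t → ∃ t' ∈ W j, t' ≠ t ∧ t' ∈ univ.image s) :
    ∃ s' : ι → α, (∀ j, s' j ∈ W j) ∧ #(univ.image s') < #(univ.image s) := by
  choose f hfW hft hfs using h
  refine ⟨fun j => if hj : s j = t then f j hj else s j, fun j => ?_, ?_⟩
  · dsimp only
    split_ifs with hj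
    exacts [hfW j hj, hs j]
  · refine (card_le_card fun x hx => ?_).trans_lt (card_erase_lt_of_mem ht)
    obtain ⟨j, -, rfl⟩ := mem_image.mp hx
    split_ifs with hj
    · exact mem_erase.mpr ⟨hft j hj, hfs j hj⟩
    · exact mem_erase.mpr ⟨hj, mem_image_of_mem s (mem_univ j)⟩

theorem exists_isolated_of_card_image_le {W : ι → Set α} {s : ι → α} {t : α}
    (hs : ∀ j, s j ∈ W j)
    (hmin : ∀ s' : ι → α, (∀ j, s' j ∈ W j) → #(univ.image s) ≤ #(univ.image s'))
    (ht : t ∈ univ.image s) :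
    ∃ j, s j = t ∧ ∀ t' ∈ W j, t' ≠ t → t' ∉ univ.image s := by
  by_contra! h
  obtain ⟨s', hs'W, hlt⟩ := exists_card_image_lt_of_relocatable hs ht h
  exact (hmin s' hs'W).not_gt hlt

theorem exists_slot_representative {P : α → ι → Prop} (s : ι → α)
    (h : ∀ t ∈ univ.image s, ∃ j, s j = t ∧ P t j) :
    ∃ w : ι → ι, (∀ j, s (w j) = s j ∧ P (s j) (w j)) ∧ ∀ j k, s j = s k → w j = w k := by
  choose g hgs hgP using h
  have hmem j : s j ∈ univ.image s := mem_image_of_mem s (mem_univ j)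
  refine ⟨fun j => g (s j) (hmem j), fun j => ⟨hgs _ _, hgP _ _⟩, fun j k hjk => ?_⟩
  simp only [hjk]

end Relocation

section Payments

variable {n : ℕ} {s : Fin n → ℤ}

theorem unitCost_le_one (l : ℕ) : unitCost l ≤ 1 := by
  unfold unitCost
  split_ifs <;> norm_num

theorem unitCost_of_ne_zero {l : ℕ} (hl : l ≠ 0) : unitCost l = 1 := if_neg hl

theorem load_self_ne_zero (j : Fin n) : load s (s j) ≠ 0 :=
  card_ne_zero_of_mem (mem_filter.mpr ⟨mem_univ j, rfl⟩)

theorem load_eq_zero_of_notMem {t : ℤ} (ht : t ∉ univ.image s) : load s t = 0 :=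
  card_eq_zero.mpr <| filter_eq_empty_iff.mpr fun j _ hj =>
    ht (hj ▸ mem_image_of_mem s (mem_univ j))

theorem pay_eq_zero_of_notMem (ξ : Fin n → ℝ) {t : ℤ} (ht : t ∉ univ.image s) :
    pay s ξ t = 0 :=
  sum_eq_zero fun j hj => absurd ((mem_filter.mp hj).2 ▸ mem_image_of_mem s (mem_univ j)) ht

def leaderPay (w : Fin n → Fin n) (j : Fin n) : ℝ := if w j = j then 1 else 0

theorem leaderPay_nonneg (w : Fin n → Fin n) (j : Fin n) : 0 ≤ leaderPay w j := by
  unfold leaderPay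
  split_ifs <;> norm_num

theorem leaderPay_le_max_zero {w : Fin n → Fin n} {j : Fin n} {x : ℝ} (h : w j = j → 1 ≤ x) :
    leaderPay w j ≤ max 0 x := by
  unfold leaderPay
  split_ifs with hj
  exacts [(h hj).trans (le_max_right 0 x), le_max_left 0 x]

theorem pay_leaderPay {w : Fin n → Fin n} (hw : ∀ j, s (w j) = s j)
    (hws : ∀ j k, s j = s k → w j = w k) (j : Fin n) : pay s (leaderPay w) (s j) = 1 := by
  have hleader : ∀ k ∈ univ.filter (fun k => s k = s j),
      leaderPay w k = if w j = k then 1 else 0 :=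
    fun k hk => by rw [leaderPay, hws k j (mem_filter.mp hk).2]
  rw [pay, sum_congr rfl hleader, sum_ite_eq]
  exact if_pos (by simpa using hw j)

end Payments

theorem optimal_supports_ne {n : ℕ}
    (r e : Fin n → ℤ) (sstar : Fin n → ℤ)
    (hstarwin : ∀ j, sstar j ∈ Finset.Icc (r j) (e j))
    (hstaropt : ∀ s' : Fin n → ℤ, (∀ j, s' j ∈ Finset.Icc (r j) (e j)) →
      occupied sstar ≤ occupied s') :
    (∀ t ∈ Finset.univ.image sstar, ∃ j : Fin n, sstar j = t ∧
      ∀ t' ∈ Finset.Icc (r j) (e j), t' ≠ t → t' ∉ Finset.univ.image sstar) ∧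
    ∃ ξ : Fin n → ℝ, (∀ j, 0 ≤ ξ j) ∧
      (∀ j, unitCost (load sstar (sstar j)) ≤ pay sstar ξ (sstar j)) ∧
      (∀ j, ∀ t ∈ Finset.Icc (r j) (e j), t ≠ sstar j →
        ξ j ≤ max 0 (unitCost (load sstar t + 1) - pay sstar ξ t)) ∧
      (∀ j, ξ j ≤ max 0 (unitCost (load sstar (sstar j))
        - (pay sstar ξ (sstar j) - ξ j))) := by
  have hisolated : ∀ t ∈ univ.image sstar, ∃ j, sstar j = t ∧
      ∀ t' ∈ Icc (r j) (e j), t' ≠ t → t' ∉ univ.image sstar := fun t ht =>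
    exists_isolated_of_card_image_le (W := fun j => ↑(Icc (r j) (e j))) hstarwin hstaropt ht
  obtain ⟨w, hw, hws⟩ := exists_slot_representative sstar hisolated
  have hpay := pay_leaderPay (fun j => (hw j).1) hws
  refine ⟨hisolated, leaderPay w, leaderPay_nonneg w, fun j => ?_, fun j t ht htj => ?_,
    fun j => leaderPay_le_max_zero fun hj => ?_⟩
  · rw [hpay]
    exact unitCost_le_one _
  · refine leaderPay_le_max_zero fun hj => ?_
    have hempty : t ∉ univ.image sstar := (hw j).2 t (hj.symm ▸ ht) htj
    rw [load_eq_zero_of_notMem hempty, pay_eq_zero_of_notMem _ hempty,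
      zero_add, unitCost_of_ne_zero one_ne_zero]
    norm_num
  · rw [hpay, unitCost_of_ne_zero (load_self_ne_zero j), leaderPay, if_pos hj]
    norm_num
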